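/- Let d ≥ 5 and let (X_n)_{n≥0} be the simple random walk on ℤ^d started at the origin, with n-step trace graph G_n. Then liminf_{n→∞} (1/n) ∑_{i=0}^{n−1} P(diam(G_{i+1}) > diam(G_i)) ≥ c(d). -/

import Mathlib

open MeasureTheory ProbabilityTheory Filter

noncomputable section

namespace RWLoc

/-- The `i`-th standard basis vector of `ℤ^d`. -/
def basis (d : ℕ) (i : Fin d) : Fin d → ℤ := fun j => if j = i then 1 else 0

/-- The set of the `2d` signed standard basis vectors of `ℤ^d`. -/
def stepSet (d : ℕ) : Finset (Fin d → ℤ) :=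
  Finset.image (basis d) Finset.univ ∪ Finset.image (fun i => -basis d i) Finset.univ

/-- The uniform distribution on the `2d` signed standard basis vectors of `ℤ^d`. -/
def stepMeasure (d : ℕ) : Measure (Fin d → ℤ) :=
  ((stepSet d).card : ENNReal)⁻¹ • ∑ s ∈ stepSet d, Measure.dirac s

/-- `T` is an i.i.d. family of uniform steps (uniform on the `2d` signed standard basis
vectors) on the probability space `(Ω, μ)`. -/
def IsSteps {Ω : Type*} [MeasurableSpace Ω] (μ : Measure Ω) (d : ℕ) {ι : Type*}
    (T : ι → Ω → (Fin d → ℤ)) : Prop :=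
  IsProbabilityMeasure μ ∧ (∀ i, Measurable (T i)) ∧
    iIndepFun T μ ∧ ∀ i, μ.map (T i) = stepMeasure d

/-- The one-sided walk started at `v` with steps `S`: position after `n` steps. -/
def walk {d : ℕ} (v : Fin d → ℤ) (S : ℕ → (Fin d → ℤ)) (n : ℕ) : Fin d → ℤ :=
  v + ∑ i ∈ Finset.range n, S i

/-- The two-sided walk (started at the origin) determined by the steps `T`. -/
def walk₂ {d : ℕ} (T : ℤ → (Fin d → ℤ)) (n : ℤ) : Fin d → ℤ :=
  if 0 ≤ n then ∑ i ∈ Finset.Ico (0 : ℤ) n, T i else ∑ i ∈ Finset.Ico n (0 : ℤ), T i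

/-- The edge `{X̄ n, X̄ (n+1)}` is a cut-edge of the two-sided walk with steps `T`:
`{X̄ m : m ≤ n}` and `{X̄ m : m ≥ n + 1}` are disjoint. -/
def CutAt {d : ℕ} (T : ℤ → (Fin d → ℤ)) (n : ℤ) : Prop :=
  ∀ i j : ℤ, i ≤ n → n + 1 ≤ j → walk₂ T i ≠ walk₂ T j

/-- The number of `i ∈ {0, …, n-1}` such that `{X̄ i, X̄ (i+1)}` is a cut-edge. -/
def cutCount {d : ℕ} (T : ℤ → (Fin d → ℤ)) (n : ℕ) : ℕ :=
  Set.ncard {i : ℕ | i < n ∧ CutAt T (i : ℤ)}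

/-- The set of cut-edges (as unordered pairs) of the two-sided walk with steps `T`. -/
def cutEdges {d : ℕ} (T : ℤ → (Fin d → ℤ)) : Set (Sym2 (Fin d → ℤ)) :=
  {e | ∃ i : ℤ, CutAt T i ∧ e = s(walk₂ T i, walk₂ T (i + 1))}

/-- The trace graph of `X_a, …, X_b`: the simple graph whose edges are the pairs
`{X i, X (i+1)}` for `a ≤ i < b`. -/
def segGraph {V : Type*} (X : ℕ → V) (a b : ℕ) : SimpleGraph V where
  Adj u w := u ≠ w ∧ ∃ i, a ≤ i ∧ i < b ∧ ((X i = u ∧ X (i+1) = w) ∨ (X i = w ∧ X (i+1) = u))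
  symm := by
    constructor
    rintro u w ⟨h1, i, h2, h3, h4⟩
    exact ⟨h1.symm, i, h2, h3, h4.symm⟩
  loopless := by constructor; rintro u ⟨h1, -⟩; exact h1 rfl

/-- The `n`-step trace graph of `X`. -/
def traceGraph {V : Type*} (X : ℕ → V) (n : ℕ) : SimpleGraph V := segGraph X 0 n

/-- The total (infinite) trace graph of `X`. -/
def traceGraphInf {V : Type*} (X : ℕ → V) : SimpleGraph V where
  Adj u w := u ≠ w ∧ ∃ i, (X i = u ∧ X (i+1) = w) ∨ (X i = w ∧ X (i+1) = u)
  symm := by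
    constructor
    rintro u w ⟨h1, i, h4⟩
    exact ⟨h1.symm, i, h4.symm⟩
  loopless := by constructor; rintro u ⟨h1, -⟩; exact h1 rfl

/-- The maximum `G`-distance among the vertices `X_a, …, X_b`. -/
def diamOn {V : Type*} (G : SimpleGraph V) (X : ℕ → V) (a b : ℕ) : ℕ :=
  Finset.sup (Finset.Icc a b ×ˢ Finset.Icc a b) fun p => G.dist (X p.1) (X p.2)

/-- The diameter of the `n`-step trace graph of `X`. -/
def traceDiam {V : Type*} (X : ℕ → V) (n : ℕ) : ℕ := diamOn (traceGraph X n) X 0 n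

/-- The diameter of the trace graph of `X_a, …, X_b`. -/
def segDiam {V : Type*} (X : ℕ → V) (a b : ℕ) : ℕ := diamOn (segGraph X a b) X a b

/-- `x` is an endpoint of every diametrical path of `G`, where `D` is the diameter of `G` :
every path of length `D` joining two vertices at graph distance `D` has `x` as an endpoint. -/
def EndsAllDiam {V : Type*} (G : SimpleGraph V) (D : ℕ) (x : V) : Prop :=
  ∀ ⦃u w : V⦄ (p : G.Walk u w), p.IsPath → p.length = D → G.dist u w = D → u = x ∨ w = x

/-- The source `X 0` is an endpoint of every diametrical path of the `n`-step trace graph. -/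
def SourceDiam {V : Type*} (X : ℕ → V) (n : ℕ) : Prop :=
  EndsAllDiam (traceGraph X n) (traceDiam X n) (X 0)


/-- The subgraph of `ℤ^d` induced by a set of vertices `A`: edges are all pairs of vertices
of `A` at `ℓ¹`-distance `1`. -/
def inducedGraph (d : ℕ) (A : Set (Fin d → ℤ)) : SimpleGraph (Fin d → ℤ) where
  Adj u w := u ∈ A ∧ w ∈ A ∧ (∑ k, |u k - w k|) = 1
  symm := by
    constructor
    rintro u w ⟨h1, h2, h3⟩
    refine ⟨h2, h1, ?_⟩
    rw [← h3]
    exact Finset.sum_congr rfl fun k _ => abs_sub_comm _ _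
  loopless := by
    constructor
    rintro u ⟨-, -, h⟩
    simp [sub_self] at h

section
variable {d : ℕ}

lemma Ico_self_succ (n : ℤ) : Finset.Ico n (n+1) = {n} := by
  ext k; simp [Int.lt_add_one_iff, le_antisymm_iff, and_comm]

lemma sum_Ico_consec {M : Type*} [AddCommMonoid M] (f : ℤ → M) {a b c : ℤ}
    (hab : a ≤ b) (hbc : b ≤ c) :
    ∑ i ∈ Finset.Ico a c, f i = ∑ i ∈ Finset.Ico a b, f i + ∑ i ∈ Finset.Ico b c, f i := by
  rw [← Finset.Ico_union_Ico_eq_Ico hab hbc,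
    Finset.sum_union (Finset.Ico_disjoint_Ico_consecutive a b c)]

lemma walk₂_zero (T : ℤ → (Fin d → ℤ)) : walk₂ T 0 = 0 := by
  simp [walk₂]

lemma walk₂_succ (T : ℤ → (Fin d → ℤ)) {n : ℤ} (hn : 0 ≤ n) :
    walk₂ T (n+1) = walk₂ T n + T n := by
  rw [walk₂, walk₂, if_pos hn, if_pos (by omega)]
  rw [sum_Ico_consec _ hn (by omega : n ≤ n + 1), Ico_self_succ, Finset.sum_singleton]

lemma walk₂_of_nonpos (T : ℤ → (Fin d → ℤ)) {n : ℤ} (hn : n ≤ 0) :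
    walk₂ T n = ∑ i ∈ Finset.Ico n 0, T i := by
  rcases lt_or_eq_of_le hn with h | h
  · rw [walk₂, if_neg (by omega)]
  · subst h; simp [walk₂]

lemma walk₂_neg_succ (T : ℤ → (Fin d → ℤ)) {n : ℤ} (hn : n < 0) :
    walk₂ T n = T n + walk₂ T (n+1) := by
  rw [walk₂_of_nonpos T (le_of_lt hn), walk₂_of_nonpos T (by omega)]
  rw [sum_Ico_consec _ (by omega : n ≤ n + 1) (by omega : n + 1 ≤ 0),
    Ico_self_succ, Finset.sum_singleton]

/-- The shifted-and-partially-reflected step family. -/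
def shiftFam {d : ℕ} (T : ℤ → (Fin d → ℤ)) (i : ℤ) (k : ℤ) : Fin d → ℤ :=
  if 0 ≤ k + i ∧ k < 0 then -(T (k+i)) else T (k+i)

lemma walk₂_shiftFam (T : ℤ → (Fin d → ℤ)) {i : ℤ} (hi : 0 ≤ i) (m : ℤ) :
    walk₂ (shiftFam T i) m = walk₂ T (m+i) - walk₂ T i := by
  induction m using Int.induction_on with
  | zero => simp [walk₂_zero]
  | succ n ih =>
      rw [walk₂_succ _ (by positivity), ih, shiftFam,
        if_neg (by push_neg; intro; omega)]
      have : ((n:ℤ)+1+i) = ((n:ℤ)+i)+1 := by ring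
      rw [this, walk₂_succ _ (by positivity)]
      abel
  | pred n ih =>
      have h1 : (-(n:ℤ) - 1) + 1 = -(n:ℤ) := by ring
      rw [walk₂_neg_succ _ (by omega : (-(n:ℤ)-1) < 0), h1, ih, shiftFam]
      by_cases hc : 0 ≤ (-(n:ℤ)-1) + i
      · rw [if_pos ⟨hc, by omega⟩]
        have h2 : (-(n:ℤ)+i) = ((-(n:ℤ)-1)+i) + 1 := by ring
        rw [h2, walk₂_succ _ hc]
        abel
      · rw [if_neg (by push_neg; intro h; omega)]
        have h2 : walk₂ T ((-(n:ℤ)-1)+i) = T ((-(n:ℤ)-1)+i) + walk₂ T ((-(n:ℤ)-1)+i+1) := by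
          exact walk₂_neg_succ _ (by omega)
        have h3 : (-(n:ℤ)+i) = ((-(n:ℤ)-1)+i) + 1 := by ring
        rw [h3, h2]
        abel

lemma cutAt_shiftFam (T : ℤ → (Fin d → ℤ)) {i : ℤ} (hi : 0 ≤ i) :
    CutAt (shiftFam T i) 0 ↔ CutAt T i := by
  constructor
  · intro h a b ha hb
    have := h (a - i) (b - i) (by omega) (by omega)
    rw [walk₂_shiftFam T hi, walk₂_shiftFam T hi] at this
    simp only [sub_add_cancel] at this
    intro hab; exact this (by rw [hab])
  · intro h a b ha hb
    rw [walk₂_shiftFam T hi, walk₂_shiftFam T hi]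
    have := h (a + i) (b + i) (by omega) (by omega)
    intro hab; exact this (by
      have := sub_left_injective.eq_iff.mp hab
      exact this)
end


section
variable {V : Type*}

lemma traceGraph_adj {X : ℕ → V} {n k : ℕ} (hk : k < n) (hne : X k ≠ X (k+1)) :
    (traceGraph X n).Adj (X k) (X (k+1)) :=
  ⟨hne, k, Nat.zero_le k, hk, Or.inl ⟨rfl, rfl⟩⟩

lemma traceGraph_le {X : ℕ → V} {n : ℕ} : traceGraph X n ≤ traceGraph X (n+1) := by
  rintro u v ⟨h1, i, h2, h3, h4⟩
  exact ⟨h1, i, h2, by omega, h4⟩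

lemma traceGraph_reachable_zero {X : ℕ → V} {n k : ℕ} (hk : k ≤ n) :
    (traceGraph X n).Reachable (X 0) (X k) := by
  induction k with
  | zero => exact SimpleGraph.Reachable.refl _
  | succ k ih =>
      have h1 := ih (by omega)
      by_cases he : X k = X (k+1)
      · rwa [← he]
      · exact h1.trans (traceGraph_adj (by omega) he).reachable

lemma traceGraph_reachable {X : ℕ → V} {n a b : ℕ} (ha : a ≤ n) (hb : b ≤ n) :
    (traceGraph X n).Reachable (X a) (X b) :=
  (traceGraph_reachable_zero ha).symm.trans (traceGraph_reachable_zero hb)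

lemma dist_le_traceDiam {X : ℕ → V} {n a b : ℕ} (ha : a ≤ n) (hb : b ≤ n) :
    (traceGraph X n).dist (X a) (X b) ≤ traceDiam X n := by
  rw [traceDiam, diamOn]
  have : (a, b) ∈ (Finset.Icc 0 n ×ˢ Finset.Icc 0 n) := by
    simp [Finset.mem_product, Finset.mem_Icc, ha, hb]
  exact Finset.le_sup (f := fun p : ℕ × ℕ => (traceGraph X n).dist (X p.1) (X p.2)) this

lemma traceDiam_zero (X : ℕ → V) : traceDiam X 0 = 0 := by
  rw [traceDiam, diamOn]
  refine Nat.le_zero.mp (Finset.sup_le ?_)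
  rintro ⟨a, b⟩ hab
  simp only [Finset.mem_product, Finset.mem_Icc, Nat.le_zero] at hab
  obtain ⟨⟨-, ha⟩, -, hb⟩ := hab
  subst ha; subst hb
  simp [SimpleGraph.dist_self]

lemma traceDiam_succ_le (X : ℕ → V) (n : ℕ) : traceDiam X (n+1) ≤ traceDiam X n + 1 := by
  have hdist : ∀ a b : ℕ, a ≤ n → b ≤ n →
      (traceGraph X (n+1)).dist (X a) (X b) ≤ traceDiam X n := by
    intro a b ha hb
    obtain ⟨p, hp⟩ := (traceGraph_reachable (n := n) ha hb).exists_walk_length_eq_dist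
    calc (traceGraph X (n+1)).dist (X a) (X b) ≤ (p.mapLe traceGraph_le).length :=
          SimpleGraph.dist_le _
      _ = p.length := SimpleGraph.Walk.length_map _ _
      _ = (traceGraph X n).dist (X a) (X b) := hp
      _ ≤ traceDiam X n := dist_le_traceDiam ha hb
  have hlast : ∀ a : ℕ, a ≤ n →
      (traceGraph X (n+1)).dist (X a) (X (n+1)) ≤ traceDiam X n + 1 := by
    intro a ha
    by_cases he : X n = X (n+1)
    · rw [← he]
      exact le_trans (hdist a n ha le_rfl) (Nat.le_succ _)
    · obtain ⟨p, hp⟩ := (traceGraph_reachable (n := n) ha le_rfl).exists_walk_length_eq_dist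
      calc (traceGraph X (n+1)).dist (X a) (X (n+1))
          ≤ ((p.mapLe traceGraph_le).concat (traceGraph_adj (by omega) he)).length :=
            SimpleGraph.dist_le _
        _ = (p.mapLe traceGraph_le).length + 1 := SimpleGraph.Walk.length_concat _ _
        _ = p.length + 1 := by rw [SimpleGraph.Walk.length_map]
        _ ≤ traceDiam X n + 1 := by
            rw [hp]; exact Nat.add_le_add_right (dist_le_traceDiam ha le_rfl) 1
  rw [traceDiam, diamOn]
  refine Finset.sup_le ?_
  rintro ⟨a, b⟩ hab
  simp only [Finset.mem_product, Finset.mem_Icc] at hab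
  obtain ⟨⟨-, ha⟩, -, hb⟩ := hab
  rcases Nat.lt_succ_iff_lt_or_eq.mp (Nat.lt_succ_of_le ha) with ha' | ha'
  · rcases Nat.lt_succ_iff_lt_or_eq.mp (Nat.lt_succ_of_le hb) with hb' | hb'
    · exact le_trans (hdist a b (by omega) (by omega)) (Nat.le_succ _)
    · subst hb'; exact hlast a (by omega)
  · subst ha'
    rcases Nat.lt_succ_iff_lt_or_eq.mp (Nat.lt_succ_of_le hb) with hb' | hb'
    · rw [SimpleGraph.dist_comm]; exact hlast b (by omega)
    · subst hb'; simp [SimpleGraph.dist_self]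

lemma traceDiam_le_sum (X : ℕ → V) (n : ℕ) :
    traceDiam X n ≤ ∑ i ∈ Finset.range n, (if traceDiam X i < traceDiam X (i+1) then 1 else 0) := by
  induction n with
  | zero => simp [traceDiam_zero]
  | succ n ih =>
      rw [Finset.sum_range_succ]
      by_cases h : traceDiam X n < traceDiam X (n+1)
      · rw [if_pos h]
        have := traceDiam_succ_le X n
        omega
      · rw [if_neg h]
        omega
end


section
variable {d : ℕ}

open scoped Classical in
/-- Indices `i < n` of cut-edges whose "future side" contains `v`. -/
def Fset (f : ℤ → (Fin d → ℤ)) (n : ℕ) (v : Fin d → ℤ) : Finset ℕ :=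
  (Finset.range n).filter
    (fun i => CutAt f i ∧ ∃ m : ℤ, (i:ℤ)+1 ≤ m ∧ walk₂ f m = v)

lemma mem_Fset {f : ℤ → (Fin d → ℤ)} {n : ℕ} {v : Fin d → ℤ} {i : ℕ} :
    i ∈ Fset f n v ↔ i < n ∧ CutAt f i ∧ ∃ m : ℤ, (i:ℤ)+1 ≤ m ∧ walk₂ f m = v := by
  classical
  simp [Fset, Finset.mem_filter, Finset.mem_range]

lemma Fset_sdiff {f : ℤ → (Fin d → ℤ)} {n : ℕ} {u w : Fin d → ℤ}
    (h : (traceGraph (fun m : ℕ => walk₂ f (m:ℤ)) n).Adj u w) :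
    (Fset f n u \ Fset f n w).card ≤ 1 := by
  obtain ⟨hne, j, hj0, hjn, hj⟩ := h
  have hsub : Fset f n u \ Fset f n w ⊆ {j} := by
    intro i hi
    rw [Finset.mem_sdiff] at hi
    obtain ⟨hiu, hiw⟩ := hi
    rw [mem_Fset] at hiu
    obtain ⟨hin, hcut, m, hm1, hm2⟩ := hiu
    have hfut : ¬ ∃ m' : ℤ, (i:ℤ)+1 ≤ m' ∧ walk₂ f m' = w := by
      intro hex
      exact hiw (mem_Fset.mpr ⟨hin, hcut, hex⟩)
    rcases hj with ⟨hju', hjw'⟩ | ⟨hjw', hju'⟩ <;>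
      [(have hju : walk₂ f (j:ℤ) = u := hju'; have hjw : walk₂ f ((j:ℤ)+1) = w := by
          rw [← hjw']; norm_cast);
       (have hjw : walk₂ f (j:ℤ) = w := hjw'; have hju : walk₂ f ((j:ℤ)+1) = u := by
          rw [← hju']; norm_cast)]
    · exfalso
      by_cases hij : i ≤ j
      · exact hfut ⟨(j:ℤ)+1, by omega, hjw⟩
      · refine hcut (j:ℤ) m (by exact_mod_cast (by omega : (j:ℤ) ≤ (i:ℤ))) hm1 ?_
        rw [hju, hm2]
    · by_cases h1 : i + 1 ≤ j
      · exfalso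
        exact hfut ⟨(j:ℤ), by exact_mod_cast h1, hjw⟩

      by_cases h2 : j + 1 ≤ i
      · exfalso
        refine hcut ((j:ℤ)+1) m (by omega) hm1 ?_
        rw [hju, hm2]
      · have : i = j := by omega
        simp [this]
  calc (Fset f n u \ Fset f n w).card ≤ ({j} : Finset ℕ).card := Finset.card_le_card hsub
    _ = 1 := Finset.card_singleton j

lemma Fset_card_adj {f : ℤ → (Fin d → ℤ)} {n : ℕ} {u w : Fin d → ℤ}
    (h : (traceGraph (fun m : ℕ => walk₂ f (m:ℤ)) n).Adj u w) :
    (Fset f n u).card ≤ (Fset f n w).card + 1 := by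
  have hsub : Fset f n u ⊆ (Fset f n u \ Fset f n w) ∪ Fset f n w := by
    intro i hi
    rw [Finset.mem_union, Finset.mem_sdiff]
    by_cases hw : i ∈ Fset f n w
    · exact Or.inr hw
    · exact Or.inl ⟨hi, hw⟩
  calc (Fset f n u).card ≤ ((Fset f n u \ Fset f n w) ∪ Fset f n w).card :=
        Finset.card_le_card hsub
    _ ≤ (Fset f n u \ Fset f n w).card + (Fset f n w).card := Finset.card_union_le _ _
    _ ≤ 1 + (Fset f n w).card := by
        exact Nat.add_le_add_right (Fset_sdiff h) _
    _ = (Fset f n w).card + 1 := by omega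

lemma Fset_walk_bound {f : ℤ → (Fin d → ℤ)} {n : ℕ} {u w : Fin d → ℤ}
    (p : (traceGraph (fun m : ℕ => walk₂ f (m:ℤ)) n).Walk u w) :
    (Fset f n w).card ≤ (Fset f n u).card + p.length := by
  induction p with
  | nil => simp
  | @cons u v w h p ih =>
      have h1 : (Fset f n v).card ≤ (Fset f n u).card + 1 := Fset_card_adj h.symm
      rw [SimpleGraph.Walk.length_cons]
      omega

lemma Fset_source {f : ℤ → (Fin d → ℤ)} {n : ℕ} : Fset f n (walk₂ f ((0:ℕ):ℤ)) = ∅ := by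
  rw [Finset.eq_empty_iff_forall_notMem]
  intro i hi
  rw [mem_Fset] at hi
  obtain ⟨-, hcut, m, hm1, hm2⟩ := hi
  exact hcut 0 m (by exact_mod_cast Nat.zero_le i) (by omega) (by rw [hm2]; norm_num)

lemma Fset_target {f : ℤ → (Fin d → ℤ)} {n : ℕ} :
    (Fset f n (walk₂ f ((n:ℕ):ℤ))).card = cutCount f n := by
  classical
  have hset : {i : ℕ | i < n ∧ CutAt f (i:ℤ)} =
      ((Finset.filter (fun i : ℕ => CutAt f (i:ℤ)) (Finset.range n) : Finset ℕ) : Set ℕ) := by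
    ext i; simp [Finset.mem_filter, Finset.mem_range]
  rw [cutCount, hset, Set.ncard_coe_finset]
  congr 1
  ext i
  rw [mem_Fset, Finset.mem_filter, Finset.mem_range]
  constructor
  · rintro ⟨h1, h2, -⟩; exact ⟨h1, h2⟩
  · rintro ⟨h1, h2⟩
    exact ⟨h1, h2, (n:ℤ), by exact_mod_cast h1, rfl⟩

lemma cutCount_le_traceDiam (f : ℤ → (Fin d → ℤ)) (n : ℕ) :
    cutCount f n ≤ traceDiam (fun m : ℕ => walk₂ f (m:ℤ)) n := by
  set X : ℕ → (Fin d → ℤ) := fun m : ℕ => walk₂ f (m:ℤ) with hX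
  obtain ⟨p, hp⟩ :=
    (traceGraph_reachable (X := X) (n := n) (Nat.zero_le n) le_rfl).exists_walk_length_eq_dist
  have h1 : (Fset f n (X n)).card ≤ (Fset f n (X 0)).card + p.length := Fset_walk_bound p
  have h2 : (Fset f n (X 0)).card = 0 := by
    have : X 0 = walk₂ f ((0:ℕ):ℤ) := rfl
    rw [this, Fset_source, Finset.card_empty]
  have h3 : (Fset f n (X n)).card = cutCount f n := Fset_target
  rw [h2, h3, hp, zero_add] at h1
  exact le_trans h1 (dist_le_traceDiam (Nat.zero_le n) le_rfl)

lemma cutCount_le_sum (f : ℤ → (Fin d → ℤ)) (n : ℕ) :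
    cutCount f n ≤ ∑ i ∈ Finset.range n,
      (if traceDiam (fun m : ℕ => walk₂ f (m:ℤ)) i < traceDiam (fun m : ℕ => walk₂ f (m:ℤ)) (i+1)
        then 1 else 0) :=
  le_trans (cutCount_le_traceDiam f n) (traceDiam_le_sum _ n)

open scoped Classical in
lemma cutCount_eq_sum (f : ℤ → (Fin d → ℤ)) (n : ℕ) :
    cutCount f n = ∑ i ∈ Finset.range n, (if CutAt f (i:ℤ) then 1 else 0) := by
  classical
  have hset : {i : ℕ | i < n ∧ CutAt f (i:ℤ)} =
      ((Finset.filter (fun i : ℕ => CutAt f (i:ℤ)) (Finset.range n) : Finset ℕ) : Set ℕ) := by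
    ext i; simp [Finset.mem_filter, Finset.mem_range]
  rw [cutCount, hset, Set.ncard_coe_finset, Finset.card_filter]
end


section
variable {d : ℕ}


lemma measurable_sum_eval (I : Finset ℤ) :
    Measurable (fun f : ℤ → (Fin d → ℤ) => ∑ k ∈ I, f k) := by
  have h : (fun f : ℤ → (Fin d → ℤ) => ∑ k ∈ I, f k)
      = (fun y : ({k // k ∈ I} → (Fin d → ℤ)) => ∑ k ∈ I.attach, y k) ∘
        (fun f (k : {k // k ∈ I}) => f (k : ℤ)) := by
    funext f
    simp [Function.comp, Finset.sum_attach]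
  rw [h]
  exact (measurable_of_countable _).comp (measurable_pi_lambda _ fun k => measurable_pi_apply _)

lemma measurable_walk₂ (m : ℤ) : Measurable (fun f : ℤ → (Fin d → ℤ) => walk₂ f m) := by
  by_cases h : 0 ≤ m
  · simp only [walk₂, if_pos h]; exact measurable_sum_eval _
  · simp only [walk₂, if_neg h]; exact measurable_sum_eval _

lemma measurableSet_eq_walk (a b : ℤ) :
    MeasurableSet {f : ℤ → (Fin d → ℤ) | walk₂ f a = walk₂ f b} := by
  have h : {f : ℤ → (Fin d → ℤ) | walk₂ f a = walk₂ f b}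
      = ⋃ v : (Fin d → ℤ), ((fun f => walk₂ f a) ⁻¹' {v}) ∩ ((fun f => walk₂ f b) ⁻¹' {v}) := by
    ext f
    simp only [Set.mem_setOf_eq, Set.mem_iUnion, Set.mem_inter_iff, Set.mem_preimage,
      Set.mem_singleton_iff]
    exact ⟨fun h => ⟨walk₂ f b, h, rfl⟩, fun ⟨v, h1, h2⟩ => h1.trans h2.symm⟩
  rw [h]
  exact MeasurableSet.iUnion fun v =>
    ((measurable_walk₂ a) (measurableSet_singleton v)).inter
      ((measurable_walk₂ b) (measurableSet_singleton v))

lemma measurableSet_cutAt (i : ℤ) :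
    MeasurableSet {f : ℤ → (Fin d → ℤ) | CutAt f i} := by
  have h : {f : ℤ → (Fin d → ℤ) | CutAt f i}
      = ⋂ (a : ℤ) (b : ℤ), {f | a ≤ i → i + 1 ≤ b → walk₂ f a ≠ walk₂ f b} := by
    ext f
    simp only [Set.mem_setOf_eq, Set.mem_iInter, CutAt]
  rw [h]
  refine MeasurableSet.iInter fun a => MeasurableSet.iInter fun b => ?_
  by_cases ha : a ≤ i
  · by_cases hb : i + 1 ≤ b
    · have h2 : {f : ℤ → (Fin d → ℤ) | a ≤ i → i+1 ≤ b → walk₂ f a ≠ walk₂ f b}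
          = {f : ℤ → (Fin d → ℤ) | walk₂ f a = walk₂ f b}ᶜ := by
        ext f; simp [ha, hb]
      rw [h2]
      exact (measurableSet_eq_walk a b).compl
    · have h2 : {f : ℤ → (Fin d → ℤ) | a ≤ i → i+1 ≤ b → walk₂ f a ≠ walk₂ f b} = Set.univ := by
        ext f; simp [hb]
      rw [h2]; exact MeasurableSet.univ
  · have h2 : {f : ℤ → (Fin d → ℤ) | a ≤ i → i+1 ≤ b → walk₂ f a ≠ walk₂ f b} = Set.univ := by
      ext f; simp [ha]
    rw [h2]; exact MeasurableSet.univ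

variable {Ω : Type*} [MeasurableSpace Ω] {T : ℤ → Ω → (Fin d → ℤ)}

lemma measurable_steps (hT : ∀ k, Measurable (T k)) :
    Measurable (fun ω (k : ℤ) => T k ω) :=
  measurable_pi_lambda _ hT

lemma measurableSet_cut_event (hT : ∀ k, Measurable (T k)) (i : ℤ) :
    MeasurableSet {ω | CutAt (fun k => T k ω) i} :=
  (measurable_steps hT) (measurableSet_cutAt i)

lemma traceGraph_congr {W : Type*} {X Y : ℕ → W} {n : ℕ} (h : ∀ m ≤ n, X m = Y m) :
    traceGraph X n = traceGraph Y n := by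
  ext u v
  constructor <;> rintro ⟨h1, i, hi0, hin, hc⟩ <;> refine ⟨h1, i, hi0, hin, ?_⟩
  · rw [← h i (by omega), ← h (i+1) (by omega)]; exact hc
  · rw [h i (by omega), h (i+1) (by omega)]; exact hc

lemma traceDiam_congr {W : Type*} {X Y : ℕ → W} {n : ℕ} (h : ∀ m ≤ n, X m = Y m) :
    traceDiam X n = traceDiam Y n := by
  rw [traceDiam, traceDiam, diamOn, diamOn, traceGraph_congr h]
  refine Finset.sup_congr rfl ?_
  rintro ⟨a, b⟩ hab
  simp only [Finset.mem_product, Finset.mem_Icc] at hab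
  rw [h a (by omega), h b (by omega)]

lemma measurableSet_diam_event (hT : ∀ k, Measurable (T k)) (i : ℕ) :
    MeasurableSet {ω | traceDiam (fun m : ℕ => walk₂ (fun k => T k ω) (m:ℤ)) i <
      traceDiam (fun m : ℕ => walk₂ (fun k => T k ω) (m:ℤ)) (i+1)} := by
  set Ψ : Ω → (Fin (i+2) → (Fin d → ℤ)) :=
    fun ω j => walk₂ (fun k => T k ω) ((j : ℕ) : ℤ) with hΨdef
  have hΨ : Measurable Ψ := measurable_pi_lambda _ fun j =>
    (measurable_walk₂ _).comp (measurable_steps hT)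
  set S : Set (Fin (i+2) → (Fin d → ℤ)) :=
    {y | traceDiam (fun m : ℕ => if h : m < i+2 then y ⟨m, h⟩ else 0) i <
         traceDiam (fun m : ℕ => if h : m < i+2 then y ⟨m, h⟩ else 0) (i+1)} with hSdef
  have hS : MeasurableSet S := (Set.to_countable S).measurableSet
  have he : {ω | traceDiam (fun m : ℕ => walk₂ (fun k => T k ω) (m:ℤ)) i <
      traceDiam (fun m : ℕ => walk₂ (fun k => T k ω) (m:ℤ)) (i+1)} = Ψ ⁻¹' S := by
    ext ω
    simp only [Set.mem_setOf_eq, Set.mem_preimage, hSdef]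
    have key : ∀ n : ℕ, n ≤ i + 1 →
        traceDiam (fun m : ℕ => if h : m < i+2 then Ψ ω ⟨m, h⟩ else 0) n
          = traceDiam (fun m : ℕ => walk₂ (fun k => T k ω) (m:ℤ)) n := by
      intro n hn
      refine traceDiam_congr fun m hm => ?_
      rw [dif_pos (by omega : m < i + 2)]
    rw [key i (by omega), key (i+1) le_rfl]
  rw [he]
  exact hΨ hS
end


section
variable {d : ℕ}

lemma stepMeasure_singleton (v : Fin d → ℤ) :
    stepMeasure d {v} = ((stepSet d).card : ENNReal)⁻¹ * (if v ∈ stepSet d then 1 else 0) := by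
  classical
  rw [stepMeasure, Measure.smul_apply, Measure.finset_sum_apply]
  have h : ∀ s ∈ stepSet d, Measure.dirac s {v} = if s = v then (1 : ENNReal) else 0 := by
    intro s _
    rw [Measure.dirac_apply' s (measurableSet_singleton v), Set.indicator_apply]
    simp [Set.mem_singleton_iff]
  rw [Finset.sum_congr rfl h, Finset.sum_ite_eq' (stepSet d) v (fun _ => (1 : ENNReal))]
  simp [smul_eq_mul]

lemma neg_mem_stepSet {v : Fin d → ℤ} (h : v ∈ stepSet d) : -v ∈ stepSet d := by
  classical
  rw [stepSet, Finset.mem_union] at h ⊢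
  rcases h with h | h
  · right
    obtain ⟨i, -, rfl⟩ := Finset.mem_image.mp h
    exact Finset.mem_image.mpr ⟨i, Finset.mem_univ i, rfl⟩
  · left
    obtain ⟨i, -, rfl⟩ := Finset.mem_image.mp h
    exact Finset.mem_image.mpr ⟨i, Finset.mem_univ i, by rw [neg_neg]⟩

lemma neg_mem_stepSet_iff {v : Fin d → ℤ} : -v ∈ stepSet d ↔ v ∈ stepSet d :=
  ⟨fun h => by simpa using neg_mem_stepSet h, neg_mem_stepSet⟩

lemma stepMeasure_map_neg :
    (stepMeasure d).map (fun v : Fin d → ℤ => -v) = stepMeasure d := by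
  have hneg : Measurable (fun v : Fin d → ℤ => -v) := measurable_of_countable _
  refine Measure.ext_of_singleton fun v => ?_
  rw [Measure.map_apply hneg (measurableSet_singleton v)]
  have h : (fun v : Fin d → ℤ => -v) ⁻¹' {v} = {-v} := by
    ext w; simp [neg_eq_iff_eq_neg]
  rw [h, stepMeasure_singleton, stepMeasure_singleton]
  by_cases hv : v ∈ stepSet d <;> simp [hv, neg_mem_stepSet_iff]

variable {Ω : Type*} [MeasurableSpace Ω] {μ : Measure Ω} {T : ℤ → Ω → (Fin d → ℤ)}

lemma measure_cyl (hT : IsSteps μ d T) (I : Finset ℤ) (S : Set ({k // k ∈ I} → (Fin d → ℤ))) :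
    μ ((fun ω (k : {k // k ∈ I}) => T k ω) ⁻¹' S)
      = ∑' y : S, ∏ k ∈ I.attach, stepMeasure d {(y : {k // k ∈ I} → (Fin d → ℤ)) k} := by
  classical
  set Ψ : Ω → ({k // k ∈ I} → (Fin d → ℤ)) := fun ω k => T k ω with hΨdef
  have hΨ : Measurable Ψ := measurable_pi_lambda _ fun k => hT.2.1 k
  have hdecomp : Ψ ⁻¹' S = ⋃ y : S, Ψ ⁻¹' {(y : {k // k ∈ I} → (Fin d → ℤ))} := by
    ext ω
    simp only [Set.mem_preimage, Set.mem_iUnion, Set.mem_singleton_iff]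
    exact ⟨fun h => ⟨⟨Ψ ω, h⟩, rfl⟩, fun ⟨y, hy⟩ => hy ▸ y.2⟩
  have hdisj : Pairwise (Function.onFun Disjoint
      fun y : S => Ψ ⁻¹' {(y : {k // k ∈ I} → (Fin d → ℤ))}) := by
    intro y z hyz
    refine Set.disjoint_left.mpr fun ω h1 h2 => ?_
    simp only [Set.mem_preimage, Set.mem_singleton_iff] at h1 h2
    exact hyz (Subtype.ext (h1 ▸ h2 ▸ rfl))
  have hmeas : ∀ y : S, MeasurableSet (Ψ ⁻¹' {(y : {k // k ∈ I} → (Fin d → ℤ))}) :=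
    fun y => hΨ (measurableSet_singleton _)
  rw [hdecomp, measure_iUnion hdisj hmeas]
  congr 1
  funext y
  -- compute the measure of a single point preimage
  set y₀ : {k // k ∈ I} → (Fin d → ℤ) := (y : {k // k ∈ I} → (Fin d → ℤ))
  set sets : ℤ → Set (Fin d → ℤ) := fun k => if h : k ∈ I then {y₀ ⟨k, h⟩} else Set.univ
    with hsets
  have hseteq : Ψ ⁻¹' {y₀} = ⋂ k ∈ I, T k ⁻¹' sets k := by
    ext ω
    simp only [Set.mem_preimage, Set.mem_singleton_iff, Set.mem_iInter]
    constructor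
    · intro h k hk
      rw [hsets]
      simp only [dif_pos hk, Set.mem_singleton_iff]
      exact congrFun h ⟨k, hk⟩
    · intro h
      funext k
      have := h (k : ℤ) k.2
      rw [hsets] at this
      simp only [dif_pos k.2, Set.mem_singleton_iff] at this
      exact this
  have hsetsmeas : ∀ k ∈ I, MeasurableSet (sets k) := by
    intro k hk
    rw [hsets]
    simp only [dif_pos hk]
    exact measurableSet_singleton _
  have hind := hT.2.2.1.measure_inter_preimage_eq_mul I hsetsmeas
  rw [hseteq, hind]
  rw [← Finset.prod_attach I (fun k => μ (T k ⁻¹' sets k))]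
  refine Finset.prod_congr rfl fun k _ => ?_
  have h1 : sets (k : ℤ) = {y₀ k} := by
    rw [hsets]; simp only [dif_pos k.2]
  rw [h1, ← hT.2.2.2 (k : ℤ),
    Measure.map_apply (hT.2.1 (k : ℤ)) (measurableSet_singleton _)]

lemma isSteps_map_eq {Ω' : Type*} [MeasurableSpace Ω'] {ν : Measure Ω'}
    {U : ℤ → Ω' → (Fin d → ℤ)} (hT : IsSteps μ d T) (hU : IsSteps ν d U) :
    μ.map (fun ω (k : ℤ) => T k ω) = ν.map (fun ω (k : ℤ) => U k ω) := by
  have hmT : Measurable (fun ω (k : ℤ) => T k ω) := measurable_steps hT.2.1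
  have hmU : Measurable (fun ω (k : ℤ) => U k ω) := measurable_steps hU.2.1
  haveI := hT.1
  haveI := hU.1
  haveI : IsProbabilityMeasure (μ.map (fun ω (k : ℤ) => T k ω)) :=
    Measure.isProbabilityMeasure_map hmT.aemeasurable
  haveI : IsProbabilityMeasure (ν.map (fun ω (k : ℤ) => U k ω)) :=
    Measure.isProbabilityMeasure_map hmU.aemeasurable
  refine ext_of_generate_finite (measurableCylinders (fun _ : ℤ => Fin d → ℤ))
    generateFrom_measurableCylinders.symm isPiSystem_measurableCylinders ?_ (by simp)
  intro t ht
  have htm : MeasurableSet t := MeasurableSet.of_mem_measurableCylinders ht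
  obtain ⟨I, S₀, hS₀, rfl⟩ := (mem_measurableCylinders t).mp ht
  rw [Measure.map_apply hmT htm, Measure.map_apply hmU htm]
  have h1 : (fun ω (k : ℤ) => T k ω) ⁻¹' (cylinder I S₀)
      = (fun ω (k : {k // k ∈ I}) => T k ω) ⁻¹' S₀ := rfl
  have h2 : (fun ω (k : ℤ) => U k ω) ⁻¹' (cylinder I S₀)
      = (fun ω (k : {k // k ∈ I}) => U k ω) ⁻¹' S₀ := rfl
  rw [h1, h2, measure_cyl hT, measure_cyl hU]
end


section
variable {d : ℕ} {Ω : Type*} [MeasurableSpace Ω] {μ : Measure Ω} {T : ℤ → Ω → (Fin d → ℤ)}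

/-- The sign-adjusting map used by `shiftFam`. -/
def sgn (i k : ℤ) : (Fin d → ℤ) → (Fin d → ℤ) :=
  fun v => if 0 ≤ k + i ∧ k < 0 then -v else v

lemma sgn_measurable (i k : ℤ) : Measurable (sgn (d := d) i k) :=
  measurable_of_countable _

lemma shiftFam_eq (f : ℤ → (Fin d → ℤ)) (i k : ℤ) :
    shiftFam f i k = sgn i k (f (k + i)) := rfl

lemma isSteps_shift (hT : IsSteps μ d T) {i : ℤ} (hi : 0 ≤ i) :
    IsSteps μ d (fun k ω => shiftFam (fun k' => T k' ω) i k) := by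
  have hUeq : ∀ k, (fun ω => shiftFam (fun k' => T k' ω) i k)
      = (sgn i k) ∘ (T (k + i)) := fun k => rfl
  refine ⟨hT.1, ?_, ?_, ?_⟩
  · intro k
    show Measurable (fun ω => shiftFam (fun k' => T k' ω) i k)
    rw [hUeq k]
    exact (sgn_measurable i k).comp (hT.2.1 (k + i))
  · rw [iIndepFun_iff_measure_inter_preimage_eq_mul]
    intro S sets hsets
    classical
    -- transfer to the shifted finset
    set S' : Finset ℤ := S.image (· + i) with hS'
    have hinj : Function.Injective (· + i) := add_left_injective i
    set sets' : ℤ → Set (Fin d → ℤ) := fun j => sgn i (j - i) ⁻¹' sets (j - i) with hsets'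
    have hsets'meas : ∀ j ∈ S', MeasurableSet (sets' j) := by
      intro j hj
      obtain ⟨k, hk, rfl⟩ := Finset.mem_image.mp hj
      rw [hsets']
      simp only [add_sub_cancel_right]
      exact (sgn_measurable i k) (hsets k hk)
    have hIeq : (⋂ k ∈ S, (fun ω => shiftFam (fun k' => T k' ω) i k) ⁻¹' sets k)
        = ⋂ j ∈ S', T j ⁻¹' sets' j := by
      ext ω
      simp only [Set.mem_iInter, Set.mem_preimage, hS', Finset.mem_image]
      constructor
      · rintro h j ⟨k, hk, rfl⟩
        rw [hsets']
        simp only [add_sub_cancel_right, Set.mem_preimage]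
        exact h k hk
      · intro h k hk
        have := h (k + i) ⟨k, hk, rfl⟩
        rw [hsets'] at this
        simp only [add_sub_cancel_right, Set.mem_preimage] at this
        exact this
    have hind := hT.2.2.1.measure_inter_preimage_eq_mul S' hsets'meas
    rw [hIeq, hind, Finset.prod_image (fun k _ k' _ h => hinj h)]
    refine Finset.prod_congr rfl fun k _ => ?_
    congr 1
    rw [hsets']
    simp only [add_sub_cancel_right]
    rfl
  · intro k
    show μ.map (fun ω => shiftFam (fun k' => T k' ω) i k) = stepMeasure d
    rw [hUeq k, ← Measure.map_map (sgn_measurable i k) (hT.2.1 (k + i)), hT.2.2.2 (k + i)]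
    by_cases hc : 0 ≤ k + i ∧ k < 0
    · have : sgn (d := d) i k = fun v => -v := by
        funext v; rw [sgn, if_pos hc]
      rw [this]
      exact stepMeasure_map_neg
    · have : sgn (d := d) i k = id := by
        funext v; rw [sgn, if_neg hc]; rfl
      rw [this]
      exact Measure.map_id

lemma cut_measure_shift (hT : IsSteps μ d T) {i : ℤ} (hi : 0 ≤ i) :
    μ {ω | CutAt (fun k => T k ω) i} = μ {ω | CutAt (fun k => T k ω) 0} := by
  set U : ℤ → Ω → (Fin d → ℤ) := fun k ω => shiftFam (fun k' => T k' ω) i k with hUdef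
  have hU : IsSteps μ d U := isSteps_shift hT hi
  have hevent : {ω | CutAt (fun k => T k ω) i} = {ω | CutAt (fun k => U k ω) 0} := by
    ext ω
    simp only [Set.mem_setOf_eq, hUdef]
    exact (cutAt_shiftFam (fun k => T k ω) hi).symm
  have h1 : {ω | CutAt (fun k => U k ω) 0}
      = (fun ω (k : ℤ) => U k ω) ⁻¹' {f : ℤ → (Fin d → ℤ) | CutAt f 0} := rfl
  have h2 : {ω | CutAt (fun k => T k ω) 0}
      = (fun ω (k : ℤ) => T k ω) ⁻¹' {f : ℤ → (Fin d → ℤ) | CutAt f 0} := rfl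
  rw [hevent, h1, h2,
    ← Measure.map_apply (measurable_steps hU.2.1) (measurableSet_cutAt 0),
    ← Measure.map_apply (measurable_steps hT.2.1) (measurableSet_cutAt 0),
    isSteps_map_eq hU hT]
end


/-- For `d ≥ 5`, for the simple random walk on `ℤ^d` started at the origin,
`liminf_n (1/n) ∑_{i<n} P(diam(G_{i+1}) > diam(G_i)) ≥ c(d)`. -/
theorem stmt_10 {Ω : Type*} [MeasurableSpace Ω] (μ : Measure Ω) (d : ℕ) (hd : 5 ≤ d)
    (T : ℤ → Ω → (Fin d → ℤ)) (hT : IsSteps μ d T)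
    (c : ℝ) (hc : c = (μ {ω | CutAt (fun i => T i ω) 0}).toReal) :
    c ≤ atTop.liminf (fun n : ℕ => (∑ i ∈ Finset.range n,
        (μ {ω | traceDiam (fun m : ℕ => walk₂ (fun k => T k ω) (m : ℤ)) i <
            traceDiam (fun m : ℕ => walk₂ (fun k => T k ω) (m : ℤ)) (i + 1)}).toReal) / n) := by
  classical
  haveI hprob : IsProbabilityMeasure μ := hT.1
  set A : ℕ → Set Ω := fun i => {ω | CutAt (fun k => T k ω) (i:ℤ)} with hA
  set B : ℕ → Set Ω := fun i =>
    {ω | traceDiam (fun m : ℕ => walk₂ (fun k => T k ω) (m : ℤ)) i <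
        traceDiam (fun m : ℕ => walk₂ (fun k => T k ω) (m : ℤ)) (i + 1)} with hB
  have hAm : ∀ i, MeasurableSet (A i) := fun i => measurableSet_cut_event hT.2.1 (i:ℤ)
  have hBm : ∀ i, MeasurableSet (B i) := fun i => measurableSet_diam_event hT.2.1 i
  have hA0 : A 0 = {ω | CutAt (fun i => T i ω) 0} := by
    rw [hA]; norm_num
  have hAeq : ∀ i : ℕ, μ (A i) = μ (A 0) := by
    intro i
    rw [hA0, hA]
    exact cut_measure_shift hT (by exact_mod_cast Nat.zero_le i)
  -- the key inequality between sums of measures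
  have hle : ∀ n : ℕ, ∑ i ∈ Finset.range n, μ (A i) ≤ ∑ i ∈ Finset.range n, μ (B i) := by
    intro n
    have hAint : ∑ i ∈ Finset.range n, μ (A i)
        = ∫⁻ ω, ∑ i ∈ Finset.range n, (A i).indicator (fun _ => (1:ENNReal)) ω ∂μ := by
      rw [lintegral_finset_sum _ (fun i _ => measurable_const.indicator (hAm i))]
      refine Finset.sum_congr rfl fun i _ => ?_
      rw [lintegral_indicator_const (hAm i), one_mul]
    have hBint : ∑ i ∈ Finset.range n, μ (B i)
        = ∫⁻ ω, ∑ i ∈ Finset.range n, (B i).indicator (fun _ => (1:ENNReal)) ω ∂μ := by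
      rw [lintegral_finset_sum _ (fun i _ => measurable_const.indicator (hBm i))]
      refine Finset.sum_congr rfl fun i _ => ?_
      rw [lintegral_indicator_const (hBm i), one_mul]
    rw [hAint, hBint]
    refine lintegral_mono fun ω => ?_
    set f : ℤ → (Fin d → ℤ) := fun k => T k ω with hf
    have hAi : ∀ i : ℕ, (A i).indicator (fun _ => (1:ENNReal)) ω
        = ((if CutAt f (i:ℤ) then 1 else 0 : ℕ) : ENNReal) := by
      intro i
      by_cases h : CutAt f (i:ℤ) <;>
        simp [hA, Set.indicator_apply, Set.mem_setOf_eq, h, hf]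
    have hBi : ∀ i : ℕ, (B i).indicator (fun _ => (1:ENNReal)) ω
        = ((if traceDiam (fun m : ℕ => walk₂ f (m:ℤ)) i
              < traceDiam (fun m : ℕ => walk₂ f (m:ℤ)) (i+1) then 1 else 0 : ℕ) : ENNReal) := by
      intro i
      by_cases h : traceDiam (fun m : ℕ => walk₂ f (m:ℤ)) i
          < traceDiam (fun m : ℕ => walk₂ f (m:ℤ)) (i+1) <;>
        simp [hB, Set.indicator_apply, Set.mem_setOf_eq, h, hf]
    calc ∑ i ∈ Finset.range n, (A i).indicator (fun _ => (1:ENNReal)) ω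
        = ((∑ i ∈ Finset.range n, if CutAt f (i:ℤ) then 1 else 0 : ℕ) : ENNReal) := by
          rw [Nat.cast_sum]
          exact Finset.sum_congr rfl fun i _ => hAi i
      _ = ((cutCount f n : ℕ) : ENNReal) := by rw [← cutCount_eq_sum]
      _ ≤ ((∑ i ∈ Finset.range n, if traceDiam (fun m : ℕ => walk₂ f (m:ℤ)) i
              < traceDiam (fun m : ℕ => walk₂ f (m:ℤ)) (i+1) then 1 else 0 : ℕ) : ENNReal) := by
          exact_mod_cast cutCount_le_sum f n
      _ = ∑ i ∈ Finset.range n, (B i).indicator (fun _ => (1:ENNReal)) ω := by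
          rw [Nat.cast_sum]
          exact (Finset.sum_congr rfl fun i _ => (hBi i)).symm
  -- per-n bound for the averages
  have hbound : ∀ n : ℕ, 1 ≤ n →
      c ≤ (∑ i ∈ Finset.range n, (μ (B i)).toReal) / n := by
    intro n hn
    have h1 : (n : ENNReal) * μ (A 0) ≤ ∑ i ∈ Finset.range n, μ (B i) := by
      have := hle n
      rwa [Finset.sum_congr rfl (fun i _ => hAeq i), Finset.sum_const,
        Finset.card_range, nsmul_eq_mul] at this
    have hfin : ∀ i ∈ Finset.range n, μ (B i) ≠ ⊤ := fun i _ => (measure_lt_top μ _).ne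
    have h2 : (n : ℝ) * c ≤ ∑ i ∈ Finset.range n, (μ (B i)).toReal := by
      have h3 := ENNReal.toReal_mono (a := (n : ENNReal) * μ (A 0))
        (ENNReal.sum_lt_top.mpr (fun i _ => measure_lt_top μ _)).ne h1
      rw [ENNReal.toReal_mul, ENNReal.toReal_natCast, ENNReal.toReal_sum hfin] at h3
      rw [hc, ← hA0]
      exact h3
    rw [le_div_iff₀ (by exact_mod_cast hn : (0:ℝ) < n), mul_comm]
    exact h2
  -- pass to the liminf
  show c ≤ atTop.liminf (fun n : ℕ => (∑ i ∈ Finset.range n, (μ (B i)).toReal) / n)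
  have hup : ∀ᶠ n : ℕ in atTop, (∑ i ∈ Finset.range n, (μ (B i)).toReal) / n ≤ 1 := by
    filter_upwards [eventually_ge_atTop 1] with n hn
    rw [div_le_one (by exact_mod_cast hn : (0:ℝ) < n)]
    calc ∑ i ∈ Finset.range n, (μ (B i)).toReal ≤ ∑ i ∈ Finset.range n, (1:ℝ) := by
          refine Finset.sum_le_sum fun i _ => ?_
          rw [← ENNReal.toReal_one]
          exact ENNReal.toReal_mono ENNReal.one_ne_top prob_le_one
      _ = n := by simp
  refine le_liminf_of_le (isCoboundedUnder_ge_of_eventually_le atTop hup) ?_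
  filter_upwards [eventually_ge_atTop 1] with n hn
  exact hbound n hn

end RWLoc
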